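/- Let v ∈ H²₀(0,1) (so v(0)=v(1)=v'(0)=v'(1)=0) satisfy W(v) ≤ c₂² for some c₂ ∈ (0, c₀). Then max_{x∈[0,1]} |v'(x)| ≤ G⁻¹(c₂/2). -/

import Mathlib

open MeasureTheory

noncomputable def c0 : ℝ := ∫ τ : ℝ, (1 + τ^2) ^ (-(5/4) : ℝ)

noncomputable def G (t : ℝ) : ℝ := ∫ τ in (0:ℝ)..t, (1 + τ^2) ^ (-(5/4) : ℝ)

noncomputable def Ginv : ℝ → ℝ := Function.invFun G

/-!
Put `u = G ∘ v'`. Then `u' = (1 + v'²)^(-5/4) v''`, so `u'²` is the integrand of `W(v)`, and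
`u(0) = u(1) = 0`. Writing `u(x)` as `∫₀ˣ u'` and as `-∫ₓ¹ u'` and applying Cauchy–Schwarz on
both pieces gives `u(x)² ≤ x (1 - x) W(v) ≤ W(v) / 4`, i.e. `2 |G (v' x)| ≤ c₂`. As `G` is odd and
strictly increasing with supremum `c₀ / 2 > c₂ / 2`, this is `|v' x| ≤ G⁻¹(c₂ / 2)`.
-/

open Set Filter Topology

theorem sq_intervalIntegral_le_mul_integral_sq {g : ℝ → ℝ} {a b : ℝ} (hab : a ≤ b)
    (hg : IntervalIntegrable g volume a b)
    (hg2 : IntervalIntegrable (fun s => g s ^ 2) volume a b) :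
    (∫ s in a..b, g s) ^ 2 ≤ (b - a) * ∫ s in a..b, g s ^ 2 := by
  have hquad : ∀ t : ℝ, 0 ≤ (∫ s in a..b, g s ^ 2) * (t * t) + (-2 * ∫ s in a..b, g s) * t
      + (b - a) := by
    intro t
    have hexp : ∫ s in a..b, (t * g s - 1) ^ 2 = (∫ s in a..b, g s ^ 2) * (t * t)
        + (-2 * ∫ s in a..b, g s) * t + (b - a) := by
      have : (fun s => (t * g s - 1) ^ 2) = fun s => t ^ 2 * g s ^ 2 - 2 * t * g s + 1 := by
        ext s; ring
      rw [this, intervalIntegral.integral_add ((hg2.const_mul _).sub (hg.const_mul _))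
          intervalIntegrable_const, intervalIntegral.integral_sub (hg2.const_mul _)
          (hg.const_mul _), intervalIntegral.integral_const_mul,
        intervalIntegral.integral_const_mul]
      simp only [intervalIntegral.integral_const, smul_eq_mul, mul_one]; ring
    exact hexp ▸ intervalIntegral.integral_nonneg hab fun s _ => sq_nonneg _
  have := discrim_le_zero hquad
  rw [discrim] at this
  nlinarith

theorem intervalIntegrable_of_sq {g : ℝ → ℝ} {a b : ℝ} (hg : AEStronglyMeasurable g volume)
    (hg2 : IntervalIntegrable (fun s => g s ^ 2) volume a b) :
    IntervalIntegrable g volume a b := by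
  rw [intervalIntegrable_iff] at hg2 ⊢
  have : IsFiniteMeasure (volume.restrict (uIoc a b)) :=
    isFiniteMeasure_restrict.2 (by simp [uIoc])
  exact ((memLp_two_iff_integrable_sq hg.restrict).2 hg2).integrable one_le_two

theorem mul_sq_le_integral_sq_deriv {u u' : ℝ → ℝ} {a b x : ℝ}
    (hu : ∀ s, HasDerivAt u (u' s) s) (ha : u a = 0) (hb : u b = 0)
    (hu' : IntervalIntegrable (fun s => u' s ^ 2) volume a b) (hx : x ∈ Icc a b) :
    (b - a) * u x ^ 2 ≤ (x - a) * (b - x) * ∫ s in a..b, u' s ^ 2 := by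
  obtain ⟨hax, hxb⟩ := hx
  have hu'_meas : AEStronglyMeasurable u' volume := by
    rw [show u' = deriv u from funext fun s => (hu s).deriv.symm]
    exact (measurable_deriv u).aestronglyMeasurable
  have hu'_int : IntervalIntegrable u' volume a b := intervalIntegrable_of_sq hu'_meas hu'
  have hxab : x ∈ uIcc a b := by rw [uIcc_of_le (hax.trans hxb)]; exact ⟨hax, hxb⟩
  have hsub_l : uIcc a x ⊆ uIcc a b := uIcc_subset_uIcc_left hxab
  have hsub_r : uIcc x b ⊆ uIcc a b := uIcc_subset_uIcc_right hxab
  have hleft : u x = ∫ s in a..x, u' s := by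
    rw [intervalIntegral.integral_eq_sub_of_hasDerivAt (fun s _ => hu s)
      (hu'_int.mono_set hsub_l), ha, sub_zero]
  have hright : -u x = ∫ s in x..b, u' s := by
    rw [intervalIntegral.integral_eq_sub_of_hasDerivAt (fun s _ => hu s)
      (hu'_int.mono_set hsub_r), hb, zero_sub]
  have hsplit := intervalIntegral.integral_add_adjacent_intervals
    (hu'.mono_set hsub_l) (hu'.mono_set hsub_r)
  have hcs_left := hleft ▸ sq_intervalIntegral_le_mul_integral_sq hax
    (hu'_int.mono_set hsub_l) (hu'.mono_set hsub_l)
  have hcs_right := hright ▸ sq_intervalIntegral_le_mul_integral_sq hxb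
    (hu'_int.mono_set hsub_r) (hu'.mono_set hsub_r)
  rw [neg_sq] at hcs_right
  rw [← hsplit]
  nlinarith [mul_le_mul_of_nonneg_left hcs_left (sub_nonneg.2 hxb),
    mul_le_mul_of_nonneg_left hcs_right (sub_nonneg.2 hax)]

noncomputable def G' (τ : ℝ) : ℝ := (1 + τ ^ 2) ^ (-(5/4) : ℝ)

theorem G'_pos (τ : ℝ) : 0 < G' τ := by unfold G'; positivity

theorem G'_neg (τ : ℝ) : G' (-τ) = G' τ := by simp [G']

theorem continuous_G' : Continuous G' :=
  (continuous_const.add (continuous_pow 2)).rpow_const fun x =>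
    Or.inl (by positivity : (0:ℝ) < 1 + x ^ 2).ne'

theorem integrable_G' : Integrable G' := by
  refine integrable_inv_one_add_sq.mono' continuous_G'.aestronglyMeasurable
    (Eventually.of_forall fun τ => ?_)
  rw [Real.norm_of_nonneg (G'_pos τ).le, ← Real.rpow_neg_one]
  exact Real.rpow_le_rpow_of_exponent_le (by nlinarith) (by norm_num)

theorem sq_G'_mul (t r : ℝ) : (G' t * r) ^ 2 = r ^ 2 * (1 + t ^ 2) ^ (-(5/2) : ℝ) := by
  rw [mul_pow, G', ← Real.rpow_mul_natCast (by positivity : (0:ℝ) ≤ 1 + t ^ 2)]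
  norm_num; ring

theorem G_eq_integral_G' (t : ℝ) : G t = ∫ τ in (0:ℝ)..t, G' τ := rfl

theorem hasDerivAt_G (t : ℝ) : HasDerivAt G (G' t) t :=
  intervalIntegral.integral_hasDerivAt_right integrable_G'.intervalIntegrable
    continuous_G'.aestronglyMeasurable.stronglyMeasurableAtFilter continuous_G'.continuousAt

theorem continuous_G : Continuous G :=
  continuous_iff_continuousAt.2 fun t => (hasDerivAt_G t).continuousAt

theorem strictMono_G : StrictMono G := by
  intro a b hab
  rw [← sub_pos, G_eq_integral_G', G_eq_integral_G',
    intervalIntegral.integral_interval_sub_left integrable_G'.intervalIntegrable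
      integrable_G'.intervalIntegrable]
  exact intervalIntegral.intervalIntegral_pos_of_pos integrable_G'.intervalIntegrable G'_pos hab

theorem G_zero : G 0 = 0 := intervalIntegral.integral_same

theorem G_neg (t : ℝ) : G (-t) = -G t := by
  rw [G_eq_integral_G', G_eq_integral_G', intervalIntegral.integral_symm, ← neg_zero,
    ← intervalIntegral.integral_comp_neg]
  simp only [G'_neg, neg_zero]

theorem G_abs (t : ℝ) : G |t| = |G t| := by
  rcases le_total 0 t with ht | ht
  · rw [abs_of_nonneg ht, abs_of_nonneg (G_zero ▸ strictMono_G.monotone ht)]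
  · rw [abs_of_nonpos ht, abs_of_nonpos (G_zero ▸ strictMono_G.monotone ht), G_neg]

theorem tendsto_G_atTop : Tendsto G atTop (𝓝 (c0 / 2)) := by
  have hc0 : c0 = 2 * ∫ τ in Ioi (0:ℝ), G' τ := by
    rw [← integral_comp_abs]
    simp [c0, G']
  rw [hc0, mul_div_cancel_left₀ _ two_ne_zero]
  exact intervalIntegral_tendsto_integral_Ioi 0 integrable_G'.integrableOn tendsto_id

theorem G_Ginv {s : ℝ} (hs0 : 0 ≤ s) (hs : s < c0 / 2) : G (Ginv s) = s := by
  obtain ⟨T, hT⟩ := (tendsto_G_atTop.eventually (eventually_gt_nhds hs)).exists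
  have hT0 : 0 ≤ T := strictMono_G.le_iff_le.1 (by rw [G_zero]; exact hs0.trans hT.le)
  obtain ⟨t, -, ht⟩ :=
    intermediate_value_Icc hT0 continuous_G.continuousOn ⟨by rwa [G_zero], hT.le⟩
  exact Function.invFun_eq ⟨t, ht⟩

theorem gradient_bound_nonsymmetric_general (v' v'' : ℝ → ℝ) (c₂ : ℝ)
    (hv' : ∀ x, HasDerivAt v' (v'' x) x)
    (hv'0 : v' 0 = 0) (hv'1 : v' 1 = 0)
    (hWint : IntervalIntegrable (fun x => v'' x ^ 2 * (1 + v' x ^ 2) ^ (-(5/2) : ℝ)) volume 0 1)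
    (hc₂ : c₂ ∈ Set.Ioo (0:ℝ) c0)
    (hW : (∫ x in (0:ℝ)..1, v'' x ^ 2 * (1 + v' x ^ 2) ^ (-(5/2) : ℝ)) ≤ c₂ ^ 2) :
    ∀ x ∈ Set.Icc (0:ℝ) 1, |v' x| ≤ Ginv (c₂ / 2) := by
  intro x hx
  have hW_eq : (fun s => (G' (v' s) * v'' s) ^ 2) =
      fun s => v'' s ^ 2 * (1 + v' s ^ 2) ^ (-(5/2) : ℝ) := funext fun s => sq_G'_mul _ _
  have hbound := mul_sq_le_integral_sq_deriv (u := fun s => G (v' s))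
    (fun s => (hasDerivAt_G (v' s)).comp s (hv' s)) (by simp [hv'0, G_zero])
    (by simp [hv'1, G_zero]) (hW_eq ▸ hWint) hx
  rw [hW_eq] at hbound
  have hW_nonneg : 0 ≤ ∫ s in (0:ℝ)..1, v'' s ^ 2 * (1 + v' s ^ 2) ^ (-(5/2) : ℝ) :=
    intervalIntegral.integral_nonneg zero_le_one fun s _ => by positivity
  have hsq : (2 * G (v' x)) ^ 2 ≤ c₂ ^ 2 := by
    nlinarith [sq_nonneg (2 * x - 1)]
  rw [← strictMono_G.le_iff_le, G_abs, G_Ginv (by linarith [hc₂.1]) (by linarith [hc₂.2])]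
  obtain ⟨hlow, hup⟩ := abs_le_of_sq_le_sq' hsq hc₂.1.le
  exact abs_le.2 ⟨by linarith, by linarith⟩

/-- Lemma 2.17: gradient bound for `v ∈ H²₀(0,1)` with `W(v) ≤ c₂²`. -/
theorem gradient_bound_nonsymmetric (v v' v'' : ℝ → ℝ) (c₂ : ℝ)
    (hv : ∀ x, HasDerivAt v (v' x) x)
    (hv' : ∀ x, HasDerivAt v' (v'' x) x)
    (hv'c : Continuous v')
    (hv0 : v 0 = 0) (hv1 : v 1 = 0) (hv'0 : v' 0 = 0) (hv'1 : v' 1 = 0)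
    (hWint : IntervalIntegrable (fun x => v'' x ^ 2 * (1 + v' x ^ 2) ^ (-(5/2) : ℝ)) volume 0 1)
    (hc₂ : c₂ ∈ Set.Ioo (0:ℝ) c0)
    (hW : (∫ x in (0:ℝ)..1, v'' x ^ 2 * (1 + v' x ^ 2) ^ (-(5/2) : ℝ)) ≤ c₂ ^ 2) :
    ∀ x ∈ Set.Icc (0:ℝ) 1, |v' x| ≤ Ginv (c₂ / 2) :=
  gradient_bound_nonsymmetric_general v' v'' c₂ hv' hv'0 hv'1 hWint hc₂ hW
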